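/- Let n ≥ 4, A ∈ PSC_n^{0,1}, h = min{i ∈ [1,n−1] : a_{n,i} > 0}, V₁^h = {i ∈ [h+1,n−1] : a_{n,i}=0}, and t = max{h−1, ⌊(m(V₁^h)+1)/2⌋} where m denotes the longest run of consecutive integers. Then exp(A) = 2(t+1). -/

import Mathlib

def IsPrimitive {n : ℕ} (A : Matrix (Fin n) (Fin n) ℝ) : Prop :=
  (∀ i j, 0 ≤ A i j) ∧ ∃ k : ℕ, 0 < k ∧ ∀ i j, 0 < (A ^ k) i j

def ExpIs {n : ℕ} (A : Matrix (Fin n) (Fin n) ℝ) (e : ℕ) : Prop :=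
  IsLeast {k : ℕ | 0 < k ∧ ∀ i j, 0 < (A ^ k) i j} e

/-- A `(0,1)` companion matrix: superdiagonal entries `1` and all other entries
`0` in the first `n-1` rows; last-row entries in `{0,1}`. -/
def IsCompanion {n : ℕ} (C : Matrix (Fin n) (Fin n) ℝ) : Prop :=
  ∀ i j : Fin n,
    if (i : ℕ) + 1 < n then (C i j = if (j : ℕ) = (i : ℕ) + 1 then 1 else 0)
    else (C i j = 0 ∨ C i j = 1)

/-- The set `C_n^{α,ε}` of symmetric companion matrices `C + Cᵀ` with
`c_{n,1} = α` and `c_{n,n} = ε`. -/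
def companionClass (n : ℕ) (hn : 0 < n) (α ε : ℝ) :
    Set (Matrix (Fin n) (Fin n) ℝ) :=
  {A | ∃ C : Matrix (Fin n) (Fin n) ℝ, IsCompanion C ∧
    C ⟨n - 1, by omega⟩ ⟨0, hn⟩ = α ∧ C ⟨n - 1, by omega⟩ ⟨n - 1, by omega⟩ = ε ∧
    A = C + C.transpose}

/-- `mRun S` : the maximum length of a run of consecutive integers contained in
`S` (`0` for the empty set). -/
noncomputable def mRun (S : Set ℕ) : ℕ := sSup {L : ℕ | ∃ a : ℕ, ∀ t, t < L → a + t ∈ S}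

/-- The exponent set of a family of matrices. -/
def expSet {n : ℕ} (X : Set (Matrix (Fin n) (Fin n) ℝ)) : Set ℕ :=
  {e | ∃ A ∈ X, IsPrimitive A ∧ ExpIs A e}

/-!
The graph of `A` (vertices `0, …, n-1`) is the path `0 — 1 — ⋯ — n-1`, a loop at `n-1`, and
chords `n-1 — s` for `s` in the support `S` of the last row (which contains `n-2`). Let `t` be the
covering radius of `S`: every vertex `u < n-1` is within path distance `t` of `S`, and some `v`
is at distance `≥ t` from all of `S`.

Upper bound: walking from `u` to a nearest chord, crossing it and then using the loop, every
vertex reaches `n-1` by walks of every length `≥ t + 1`; joining two such walks at `n-1` shows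
`A ^ (2(t+1)) > 0`. Lower bound: the path is bipartite, so a closed walk of odd length at `v` has
to use the loop or a chord, i.e. visit `n-1`, and so has length `≥ 2(t+1)`; hence
`(A ^ (2t+1)) v v = 0`.

Finally `t = max h ⌈m/2⌉`: the vertices below `h` are within `h` of the chord `h`, a vertex in a
gap of `k` consecutive non-chords is within `⌈k/2⌉` of the chords bounding the gap, and the middle
of a longest gap attains the bound.
-/

namespace Matrix

variable {ι R : Type*} [Fintype ι] [DecidableEq ι] [Semiring R] [LinearOrder R]
  [IsStrictOrderedRing R] {A : Matrix ι ι R}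

theorem pow_add_apply_pos (hA : ∀ i j, 0 ≤ A i j) {a b : ℕ} {i l j : ι}
    (h₁ : 0 < (A ^ a) i l) (h₂ : 0 < (A ^ b) l j) : 0 < (A ^ (a + b)) i j := by
  rw [pow_add, mul_apply]
  exact Finset.sum_pos'
    (fun x _ => mul_nonneg (pow_apply_nonneg hA a i x) (pow_apply_nonneg hA b x j))
    ⟨l, Finset.mem_univ l, mul_pos h₁ h₂⟩

theorem pow_succ_apply_pos_iff (hA : ∀ i j, 0 ≤ A i j) {k : ℕ} {i j : ι} :
    0 < (A ^ (k + 1)) i j ↔ ∃ l, 0 < (A ^ k) i l ∧ 0 < A l j := by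
  rw [pow_succ, mul_apply, Finset.sum_pos_iff_of_nonneg
    (fun x _ => mul_nonneg (pow_apply_nonneg hA k i x) (hA x j))]
  simp only [Finset.mem_univ, true_and]
  exact exists_congr fun l => ⟨fun h => ⟨pos_of_mul_pos_left h (hA l j),
    pos_of_mul_pos_right h (pow_apply_nonneg hA k i l)⟩, fun h => mul_pos h.1 h.2⟩

theorem pow_apply_pos_induction (hA : ∀ i j, 0 ≤ A i j) {P : ℕ → ι → Prop} {i : ι}
    (zero : P 0 i) (succ : ∀ k l j, P k l → 0 < A l j → P (k + 1) j) :
    ∀ k j, 0 < (A ^ k) i j → P k j := by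
  intro k
  induction k with
  | zero =>
    intro j hj
    obtain rfl : i = j := by by_contra h; simp [one_apply_ne h] at hj
    exact zero
  | succ k ih =>
    intro j hj
    obtain ⟨l, hil, hlj⟩ := (pow_succ_apply_pos_iff hA).1 hj
    exact succ k l j (ih l hil) hlj

theorem pow_apply_pos_symm (hA : ∀ i j, 0 ≤ A i j) (hsymm : ∀ i j, 0 < A i j → 0 < A j i)
    {k : ℕ} {i j : ι} (h : 0 < (A ^ k) i j) : 0 < (A ^ k) j i := by
  refine pow_apply_pos_induction hA (P := fun k j => 0 < (A ^ k) j i) ?_ ?_ k j h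
  · simp
  · intro k l j hl hlj
    rw [add_comm]
    exact pow_add_apply_pos hA (by rw [pow_one]; exact hsymm l j hlj) hl

theorem forall_pow_apply_pos_of_le (hA : ∀ i j, 0 ≤ A i j) (hcol : ∀ j, ∃ l, 0 < A l j) {k m : ℕ}
    (hk : ∀ i j, 0 < (A ^ k) i j) (hkm : k ≤ m) : ∀ i j, 0 < (A ^ m) i j := by
  induction m, hkm using Nat.le_induction with
  | base => exact hk
  | succ m _ ih =>
    intro i j
    obtain ⟨l, hl⟩ := hcol j
    exact pow_add_apply_pos hA (ih i l) (by rwa [pow_one])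

end Matrix

def PathLoopChordAdj (n : ℕ) (S : Set ℕ) (i j : ℕ) : Prop :=
  j = i + 1 ∨ i = j + 1 ∨ (i = n - 1 ∧ (j = n - 1 ∨ j ∈ S)) ∨ (j = n - 1 ∧ i ∈ S)

theorem PathLoopChordAdj.symm {n : ℕ} {S : Set ℕ} {i j : ℕ} (h : PathLoopChordAdj n S i j) :
    PathLoopChordAdj n S j i := by
  unfold PathLoopChordAdj at *
  tauto

theorem apply_pos_symm_of_pathLoopChordAdj {R : Type*} [Zero R] [LT R] {n : ℕ} {S : Set ℕ}
    {A : Matrix (Fin n) (Fin n) R} (hadj : ∀ i j : Fin n, 0 < A i j ↔ PathLoopChordAdj n S i j)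
    {i j : Fin n} (h : 0 < A i j) : 0 < A j i :=
  (hadj j i).2 ((hadj i j).1 h).symm

/-- Lower bounds on the length `k` of a walk from `v` to `u` when `v` is `t`-far from the chords:
`k` is at least the path distance from `v` to `u` capped at `t + 1` (and `t + 1` at `u = n - 1`);
if `k` and that distance differ in parity, the walk has left the bipartite path, so it went
through `n - 1` and `k ≥ (t + 1) + dist (n - 1) u ≥ 2 (t + 1) - dist v u`. -/
def WalkBound (n t v k u : ℕ) : Prop :=
  (if u = n - 1 then t + 1 else min (Nat.dist v u) (t + 1)) ≤ k ∧
    ((k + u + v) % 2 = 1 → (if u = n - 1 then t + 1 else 2 * (t + 1) - Nat.dist v u) ≤ k)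

theorem WalkBound.succ {n t v k w u : ℕ} {S : Set ℕ} (hb : n - 2 ∈ S)
    (hfar : ∀ s ∈ S, t ≤ Nat.dist v s) (hw : w < n) (hu : u < n) (hwu : PathLoopChordAdj n S w u)
    (h : WalkBound n t v k w) : WalkBound n t v (k + 1) u := by
  have hb' := hfar _ hb
  unfold WalkBound Nat.dist at *
  rcases hwu with e | e | ⟨e, e' | e'⟩ | ⟨e, e'⟩
  · split_ifs at h ⊢ <;> omega
  · split_ifs at h ⊢ <;> omega
  · simp only [if_pos e, if_pos e'] at h ⊢
    omega
  · have := hfar u e'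
    split_ifs at h ⊢ <;> omega
  · have := hfar w e'
    split_ifs at h ⊢ <;> omega

section PathLoopChord

open Matrix

variable {R : Type*} [Semiring R] [LinearOrder R] [IsStrictOrderedRing R] {n t : ℕ}
  {S : Set ℕ} {A : Matrix (Fin n) (Fin n) R}

theorem pow_apply_pos_of_val_eq_add (hA : ∀ i j, 0 ≤ A i j)
    (hadj : ∀ i j : Fin n, 0 < A i j ↔ PathLoopChordAdj n S i j) (d : ℕ) :
    ∀ i j : Fin n, (j : ℕ) = i + d → 0 < (A ^ d) i j := by
  induction d with
  | zero => intro i j h; simp [Fin.ext h]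
  | succ d ih =>
    intro i j h
    exact pow_add_apply_pos hA (ih i ⟨i + d, by omega⟩ rfl)
      (by rw [pow_one, hadj]; exact Or.inl (by simp only; omega))

theorem pow_dist_apply_pos (hA : ∀ i j, 0 ≤ A i j)
    (hadj : ∀ i j : Fin n, 0 < A i j ↔ PathLoopChordAdj n S i j) (i j : Fin n) :
    0 < (A ^ Nat.dist i j) i j := by
  rcases le_total (i : ℕ) j with h | h
  · exact pow_apply_pos_of_val_eq_add hA hadj _ i j (by simp only [Nat.dist]; omega)
  · exact pow_apply_pos_symm hA (fun _ _ => apply_pos_symm_of_pathLoopChordAdj hadj)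
      (pow_apply_pos_of_val_eq_add hA hadj _ j i (by simp only [Nat.dist]; omega))

theorem pow_apply_pos_of_val_eq_sub_one (hA : ∀ i j, 0 ≤ A i j)
    (hadj : ∀ i j : Fin n, 0 < A i j ↔ PathLoopChordAdj n S i j) {l : Fin n}
    (hl : (l : ℕ) = n - 1) (k : ℕ) : 0 < (A ^ k) l l := by
  induction k with
  | zero => simp
  | succ k ih =>
    refine pow_add_apply_pos hA ih ?_
    rw [pow_one, hadj]
    exact Or.inr (Or.inr (Or.inl ⟨hl, Or.inl hl⟩))

theorem pow_apply_last_pos_of_dist_lt (hA : ∀ i j, 0 ≤ A i j)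
    (hadj : ∀ i j : Fin n, 0 < A i j ↔ PathLoopChordAdj n S i j) {l u s : Fin n}
    (hl : (l : ℕ) = n - 1) (hs : (s : ℕ) ∈ S) {k : ℕ} (hk : Nat.dist u s < k) :
    0 < (A ^ k) u l := by
  obtain ⟨m, rfl⟩ : ∃ m, k = Nat.dist u s + 1 + m := ⟨k - (Nat.dist u s + 1), by omega⟩
  have hchord : 0 < (A ^ 1) s l := by
    rw [pow_one, hadj]; exact Or.inr (Or.inr (Or.inr ⟨hl, hs⟩))
  exact pow_add_apply_pos hA (pow_add_apply_pos hA (pow_dist_apply_pos hA hadj u s) hchord)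
    (pow_apply_pos_of_val_eq_sub_one hA hadj hl m)

theorem pow_two_mul_succ_apply_pos (hA : ∀ i j, 0 ≤ A i j)
    (hadj : ∀ i j : Fin n, 0 < A i j ↔ PathLoopChordAdj n S i j) (hS : ∀ s ∈ S, s < n)
    (hcover : ∀ u < n - 1, ∃ s ∈ S, Nat.dist u s ≤ t) (i j : Fin n) :
    0 < (A ^ (2 * (t + 1))) i j := by
  let l : Fin n := ⟨n - 1, by have := i.2; omega⟩
  have hreach : ∀ u : Fin n, 0 < (A ^ (t + 1)) u l := by
    intro u
    by_cases hu : (u : ℕ) = n - 1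
    · rw [show u = l from Fin.ext hu]
      exact pow_apply_pos_of_val_eq_sub_one hA hadj rfl _
    · obtain ⟨s, hs, hus⟩ := hcover u (by omega)
      exact pow_apply_last_pos_of_dist_lt (s := ⟨s, hS s hs⟩) hA hadj rfl hs (by simpa using hus)
  rw [two_mul]
  exact pow_add_apply_pos hA (hreach i)
    (pow_apply_pos_symm hA (fun _ _ => apply_pos_symm_of_pathLoopChordAdj hadj) (hreach j))

theorem not_pow_apply_pos_of_far (hA : ∀ i j, 0 ≤ A i j)
    (hadj : ∀ i j : Fin n, 0 < A i j ↔ PathLoopChordAdj n S i j) (hb : n - 2 ∈ S)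
    {v : Fin n} (hv : (v : ℕ) < n - 1) (hfar : ∀ s ∈ S, t ≤ Nat.dist v s) :
    ¬ 0 < (A ^ (2 * t + 1)) v v := by
  intro hpos
  have hv' : (v : ℕ) ≠ n - 1 := hv.ne
  have hbound := pow_apply_pos_induction hA (P := fun k u => WalkBound n t v k u)
    (by simp only [WalkBound, if_neg hv', Nat.dist]; omega)
    (fun k w u hw hwu => hw.succ hb hfar w.2 u.2 ((hadj w u).1 hwu)) _ _ hpos
  simp only [WalkBound, if_neg hv', Nat.dist] at hbound
  omega

theorem isLeast_pow_pos_of_pathLoopChordAdj (hA : ∀ i j, 0 ≤ A i j)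
    (hadj : ∀ i j : Fin n, 0 < A i j ↔ PathLoopChordAdj n S i j) (hS : ∀ s ∈ S, s < n)
    (hb : n - 2 ∈ S) (hcover : ∀ u < n - 1, ∃ s ∈ S, Nat.dist u s ≤ t)
    (hfar : ∃ v < n - 1, ∀ s ∈ S, t ≤ Nat.dist v s) :
    IsLeast {k | 0 < k ∧ ∀ i j, 0 < (A ^ k) i j} (2 * (t + 1)) := by
  refine ⟨⟨by omega, pow_two_mul_succ_apply_pos hA hadj hS hcover⟩, fun k ⟨_, hk⟩ => ?_⟩
  obtain ⟨v, hv, hvS⟩ := hfar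
  have hcol : ∀ j : Fin n, ∃ l, 0 < A l j := by
    intro j
    by_cases hj : (j : ℕ) = n - 1
    · exact ⟨j, (hadj j j).2 (Or.inr (Or.inr (Or.inl ⟨hj, Or.inl hj⟩)))⟩
    · exact ⟨⟨j + 1, by omega⟩, (hadj _ j).2 (Or.inr (Or.inl rfl))⟩
  by_contra! hlt
  exact not_pow_apply_pos_of_far (v := ⟨v, by omega⟩) hA hadj hb hv hvS
    (forall_pow_apply_pos_of_le hA hcol hk (by omega) _ _)

end PathLoopChord

section Runs

open Set

theorem bddAbove_runLengths {U : Set ℕ} (hU : BddAbove U) :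
    BddAbove {L : ℕ | ∃ a : ℕ, ∀ t, t < L → a + t ∈ U} := by
  obtain ⟨b, hb⟩ := hU
  refine ⟨b + 1, ?_⟩
  rintro L ⟨a, ha⟩
  rcases Nat.eq_zero_or_pos L with h | h
  · omega
  · have := hb (ha (L - 1) (by omega))
    omega

theorem le_mRun {U : Set ℕ} (hU : BddAbove U) {a L : ℕ} (h : ∀ j < L, a + j ∈ U) :
    L ≤ mRun U :=
  le_csSup (bddAbove_runLengths hU) ⟨a, h⟩

theorem exists_run_mRun {U : Set ℕ} (hU : BddAbove U) : ∃ a, ∀ j < mRun U, a + j ∈ U :=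
  Nat.sSup_mem (s := {L : ℕ | ∃ a : ℕ, ∀ t, t < L → a + t ∈ U}) ⟨0, 0, nofun⟩
    (bddAbove_runLengths hU)

noncomputable def runRadius (S : Set ℕ) (h₀ b : ℕ) : ℕ := max h₀ ((mRun (Icc h₀ b \ S) + 1) / 2)

variable {S : Set ℕ} {h₀ : ℕ}

theorem exists_mem_dist_le_runRadius (hS : IsLeast S h₀) {b : ℕ} (hb : b ∈ S) {u : ℕ}
    (hu : u ≤ b) : ∃ s ∈ S, Nat.dist u s ≤ runRadius S h₀ b := by
  have hh₀ : h₀ ≤ runRadius S h₀ b := le_max_left ..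
  have hm : (mRun (Icc h₀ b \ S) + 1) / 2 ≤ runRadius S h₀ b := le_max_right ..
  set t := runRadius S h₀ b
  by_contra! hfar
  unfold Nat.dist at hfar
  have h₁ := hfar h₀ hS.1
  have h₂ := hfar b hb
  have hrun : ∀ j < 2 * t + 1, u - t + j ∈ Icc h₀ b \ S := by
    intro j hj
    refine ⟨⟨by omega, by omega⟩, fun hj' => ?_⟩
    have := hfar _ hj'
    omega
  have := le_mRun (bddAbove_Icc.mono sdiff_subset) hrun
  omega

theorem exists_forall_runRadius_le_dist (hS : IsLeast S h₀) (b : ℕ) :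
    ∃ v ≤ b, ∀ s ∈ S, runRadius S h₀ b ≤ Nat.dist v s := by
  set m := mRun (Icc h₀ b \ S)
  by_cases hm : (m + 1) / 2 ≤ h₀
  · refine ⟨0, Nat.zero_le b, fun s hs => ?_⟩
    have := hS.2 hs
    simp only [runRadius, Nat.dist]
    omega
  · -- the middle of a longest gap
    obtain ⟨a, ha⟩ := exists_run_mRun (bddAbove_Icc.mono sdiff_subset : BddAbove (Icc h₀ b \ S))
    have hlast := (ha (m - 1) (by omega)).1
    refine ⟨a + (m + 1) / 2 - 1, by simp only [mem_Icc] at hlast; omega, fun s hs => ?_⟩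
    by_contra! hclose
    simp only [runRadius, Nat.dist] at hclose
    have := (ha (s - a) (by omega)).2
    rw [show a + (s - a) = s by omega] at this
    exact this hs

end Runs

section Companion

open scoped Matrix

variable {n : ℕ} {C A : Matrix (Fin n) (Fin n) ℝ}

def lastRowSupport (A : Matrix (Fin n) (Fin n) ℝ) : Set ℕ :=
  {i | ∃ h : i < n, i + 1 < n ∧ A ⟨n - 1, by omega⟩ ⟨i, h⟩ ≠ 0}

theorem IsCompanion.apply_of_lt (hC : IsCompanion C) {i : Fin n} (hi : (i : ℕ) + 1 < n)
    (j : Fin n) : C i j = if (j : ℕ) = i + 1 then 1 else 0 := by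
  simpa [hi] using hC i j

theorem IsCompanion.nonneg (hC : IsCompanion C) (i j : Fin n) : 0 ≤ C i j := by
  by_cases hi : (i : ℕ) + 1 < n
  · rw [hC.apply_of_lt hi]
    split_ifs <;> norm_num
  · have := hC i j
    rw [if_neg hi] at this
    rcases this with h | h <;> norm_num [h]

theorem IsCompanion.nonneg_of_eq_add_transpose (hC : IsCompanion C) (hA : A = C + Cᵀ)
    (i j : Fin n) : 0 ≤ A i j := by
  rw [hA]
  exact add_nonneg (hC.nonneg i j) (hC.nonneg j i)

theorem IsCompanion.pathLoopChordAdj_of_pos (hC : IsCompanion C) (hA : A = C + Cᵀ)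
    {i j : Fin n} (h : 0 < C i j) : PathLoopChordAdj n (lastRowSupport A) i j := by
  by_cases hi : (i : ℕ) + 1 < n
  · rw [hC.apply_of_lt hi] at h
    split_ifs at h with hj
    · exact Or.inl hj
    · exact absurd h (lt_irrefl 0)
  have hi' : (i : ℕ) = n - 1 := by omega
  by_cases hj : (j : ℕ) = n - 1
  · exact Or.inr (Or.inr (Or.inl ⟨hi', Or.inl hj⟩))
  refine Or.inr (Or.inr (Or.inl ⟨hi', Or.inr ⟨j.2, by omega, ?_⟩⟩))
  rw [show (⟨n - 1, _⟩ : Fin n) = i from Fin.ext hi'.symm, hA]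
  exact (add_pos_of_pos_of_nonneg h (hC.nonneg j i)).ne'

theorem IsCompanion.pos_of_pathLoopChordAdj (hC : IsCompanion C)
    (hloop : ∀ i : Fin n, (i : ℕ) = n - 1 → C i i = 1) (hA : A = C + Cᵀ) {i j : Fin n}
    (h : PathLoopChordAdj n (lastRowSupport A) i j) : 0 < A i j := by
  have hAij : A i j = C i j + C j i := by rw [hA]; rfl
  have hsuper : ∀ a b : Fin n, (b : ℕ) = a + 1 → C a b = 1 := fun a b hab => by
    rw [hC.apply_of_lt (by omega), if_pos hab]
  have hchord : ∀ a : Fin n, (a : ℕ) = n - 1 → ∀ b : Fin n, (b : ℕ) ∈ lastRowSupport A →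
      0 < A a b := fun a ha b ⟨_, _, hb⟩ => by
    rw [show a = ⟨n - 1, by omega⟩ from Fin.ext ha]
    exact lt_of_le_of_ne (hC.nonneg_of_eq_add_transpose hA _ _) (Ne.symm hb)
  rcases h with h | h | ⟨hi, hj | hj⟩ | ⟨hj, hi⟩
  · rw [hAij, hsuper i j h]; linarith [hC.nonneg j i]
  · rw [hAij, hsuper j i h]; linarith [hC.nonneg i j]
  · rw [hAij, show j = i from Fin.ext (hj.trans hi.symm), hloop i hi]; norm_num
  · exact hchord i hi j hj
  · rw [show A i j = A j i by rw [hAij, hA]; exact add_comm _ _]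
    exact hchord j hj i hi

theorem IsCompanion.apply_pos_iff (hC : IsCompanion C)
    (hloop : ∀ i : Fin n, (i : ℕ) = n - 1 → C i i = 1) (hA : A = C + Cᵀ) (i j : Fin n) :
    0 < A i j ↔ PathLoopChordAdj n (lastRowSupport A) i j := by
  refine ⟨fun h => ?_, hC.pos_of_pathLoopChordAdj hloop hA⟩
  rw [hA, Matrix.add_apply, Matrix.transpose_apply] at h
  rcases (hC.nonneg i j).lt_or_eq with hij | hij
  · exact hC.pathLoopChordAdj_of_pos hA hij
  · rw [← hij, zero_add] at h
    exact (hC.pathLoopChordAdj_of_pos hA h).symm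

theorem IsCompanion.sub_two_mem_lastRowSupport (hC : IsCompanion C) (hA : A = C + Cᵀ)
    (hn : 2 ≤ n) : n - 2 ∈ lastRowSupport A := by
  refine ⟨by omega, by omega, ?_⟩
  rw [hA, Matrix.add_apply, Matrix.transpose_apply,
    hC.apply_of_lt (i := ⟨n - 2, by omega⟩) (by simp; omega), if_pos (by simp; omega)]
  linarith [hC.nonneg ⟨n - 1, by omega⟩ ⟨n - 2, by omega⟩]

end Companion

/-- For `A ∈ PSC_n^{0,1}` with `n ≥ 4`, let `h₀` be the least (0-based) index
of a nonzero last-row entry (among the first `n-1` columns), let `V₁^h` be the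
set of indices `≥ h₀` (among the first `n-1` columns) with zero last-row
entry, and let `t = max h₀ ⌊(m(V₁^h)+1)/2⌋`. Then `exp(A) = 2(t+1)`. -/
theorem exp_PSC_zero_one {n : ℕ} (hn : 4 ≤ n)
    (C A : Matrix (Fin n) (Fin n) ℝ) (hC : IsCompanion C)
    (h2 : C ⟨n - 1, by omega⟩ ⟨n - 1, by omega⟩ = 1)
    (hA : A = C + C.transpose) (h₀ : ℕ)
    (hh : IsLeast {i : ℕ | ∃ h : i < n, i + 1 < n ∧
      A ⟨n - 1, by omega⟩ ⟨i, h⟩ ≠ 0} h₀) :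
    ExpIs A (2 * (max h₀ ((mRun {i : ℕ | h₀ ≤ i ∧ ∃ h : i < n, i + 1 < n ∧
      A ⟨n - 1, by omega⟩ ⟨i, h⟩ = 0} + 1) / 2) + 1)) := by
  have hS : IsLeast (lastRowSupport A) h₀ := hh
  have hgaps : {i : ℕ | h₀ ≤ i ∧ ∃ h : i < n, i + 1 < n ∧ A ⟨n - 1, by omega⟩ ⟨i, h⟩ = 0} =
      Set.Icc h₀ (n - 2) \ lastRowSupport A := by
    ext i
    simp only [lastRowSupport, Set.mem_ofPred_eq, Set.mem_sdiff, Set.mem_Icc, not_exists, not_and,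
      not_not]
    exact ⟨fun ⟨hi, hin, hi1, h0⟩ => ⟨⟨hi, by omega⟩, fun _ _ => h0⟩,
      fun ⟨⟨hi, hin⟩, h0⟩ => ⟨hi, by omega, by omega, h0 (by omega) (by omega)⟩⟩
  have hloop : ∀ i : Fin n, (i : ℕ) = n - 1 → C i i = 1 := fun i hi => by
    rwa [show i = ⟨n - 1, by omega⟩ from Fin.ext hi]
  obtain ⟨v, hv, hfar⟩ := exists_forall_runRadius_le_dist hS (n - 2)
  rw [hgaps]
  exact isLeast_pow_pos_of_pathLoopChordAdj (hC.nonneg_of_eq_add_transpose hA)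
    (hC.apply_pos_iff hloop hA) (fun s hs => hs.1) (hC.sub_two_mem_lastRowSupport hA (by omega))
    (fun u hu => exists_mem_dist_le_runRadius hS (hC.sub_two_mem_lastRowSupport hA (by omega))
      (by omega))
    ⟨v, by omega, hfar⟩
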